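/- arXiv:2502.18011 — 2 statements merged into one kernel-verified Lean document; each statement's English description precedes it below -/
import Mathlib

section
/- Let δ = √2/3 and b = -1/2 + i/(2√3). Let A be the 6×6 complex matrix with rows (1, conj(b), b, -δ, 2δ, -δ), (b, 1, conj(b), -δ, -δ, 2δ), (conj(b), b, 1, 2δ, -δ, -δ), (-δ, -δ, 2δ, 1, b, conj(b)), (2δ, -δ, -δ, conj(b), 1, b), (-δ, 2δ, -δ, b, conj(b), 1). Then A is Hermitian, positive semidefinite, A² = 3A, and A has rank 2. -/
/-!
Write `c` for `conj b`. The identities `b + c = -1`, `b c = 1/3` and `δ² = 2/9` turn `A² = 3A`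
into polynomial identities in `b, c, δ`, checked entrywise. Then `A = (1/3) Aᴴ A` is positive
semidefinite, and `A / 3` is idempotent, so its rank equals its trace `6 / 3 = 2`.
-/

open scoped ComplexOrder

namespace Matrix

variable {n : Type*} [Fintype n]

theorem rank_eq_trace_of_isIdempotentElem [DecidableEq n] {K : Type*} [Field K]
    {P : Matrix n n K} (hP : IsIdempotentElem P) : (P.rank : K) = P.trace := by
  have hproj := (LinearMap.isProj_range_iff_isIdempotentElem (toLin' P)).mpr
    (hP.map toLinAlgEquiv')
  rw [← trace_toLin'_eq, hproj.trace]
  rfl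

theorem rank_eq_trace_div_of_mul_self_eq_smul [DecidableEq n] {K : Type*} [Field K]
    {A : Matrix n n K} {c : K} (hc : c ≠ 0) (hA : A * A = c • A) :
    (A.rank : K) = A.trace / c := by
  have hP : IsIdempotentElem (c⁻¹ • A) := by
    rw [IsIdempotentElem, smul_mul_smul_comm, hA, smul_smul]
    congr 1
    field_simp
  rw [← rank_smul_of_mem_nonZeroDivisors A (mem_nonZeroDivisors_of_ne_zero (inv_ne_zero hc)),
    rank_eq_trace_of_isIdempotentElem hP, trace_smul, smul_eq_mul, inv_mul_eq_div]

theorem IsHermitian.posSemidef_of_mul_self_eq_smul {𝕜 : Type*} [RCLike 𝕜] {A : Matrix n n 𝕜}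
    (hA : A.IsHermitian) {c : 𝕜} (hc : 0 < c) (hAA : A * A = c • A) : A.PosSemidef := by
  have h := (posSemidef_conjTranspose_mul_self A).smul (inv_nonneg.mpr hc.le)
  rwa [hA.eq, hAA, smul_smul, inv_mul_cancel₀ hc.ne', one_smul] at h

end Matrix

def sixMatrix {R : Type*} [Ring R] (b c δ : R) : Matrix (Fin 6) (Fin 6) R := Matrix.of
  ![![1, c, b, -δ, 2 * δ, -δ],
    ![b, 1, c, -δ, -δ, 2 * δ],
    ![c, b, 1, 2 * δ, -δ, -δ],
    ![-δ, -δ, 2 * δ, 1, b, c],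
    ![2 * δ, -δ, -δ, c, 1, b],
    ![-δ, 2 * δ, -δ, b, c, 1]]

section sixMatrix

variable {R : Type*} {b c δ : R}

theorem sixMatrix_isHermitian [CommRing R] [StarRing R] (hb : star b = c) (hδ : star δ = δ) :
    (sixMatrix b c δ).IsHermitian := by
  have hc : star c = b := by rw [← hb, star_star]
  ext i j
  fin_cases i <;> fin_cases j <;> simp [sixMatrix, hb, hc, hδ, mul_comm]

theorem sixMatrix_mul_self [Field R] (hsum : b + c = -1) (hprod : 3 * (b * c) = 1)
    (hδ : 9 * δ ^ 2 = 2) : sixMatrix b c δ * sixMatrix b c δ = (3 : R) • sixMatrix b c δ := by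
  ext i j
  fin_cases i <;> fin_cases j <;>
    simp only [sixMatrix, Matrix.mul_apply, Fin.sum_univ_six, Matrix.of_apply, Matrix.smul_apply,
      Matrix.cons_val, smul_eq_mul, Fin.isValue, Fin.reduceFinMk, Fin.zero_eta, Fin.mk_one] <;>
    grind

theorem sixMatrix_trace [Ring R] : (sixMatrix b c δ).trace = 6 := by
  simp only [Matrix.trace, Matrix.diag_apply, sixMatrix, Matrix.of_apply, Fin.sum_univ_six,
    Matrix.cons_val]
  norm_num

end sixMatrix

/-- With `δ = √2/3` and `b = -1/2 + i/(2√3)`, the displayed `6×6` matrix `A` is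
Hermitian, positive semidefinite, satisfies `A² = 3A`, and has rank `2`. -/
theorem stmt_11 :
    let δ : ℂ := (Real.sqrt 2 : ℂ) / 3
    let b : ℂ := -(1 / 2) + Complex.I / (2 * (Real.sqrt 3 : ℂ))
    let A : Matrix (Fin 6) (Fin 6) ℂ := Matrix.of
      ![![1, star b, b, -δ, 2 * δ, -δ],
        ![b, 1, star b, -δ, -δ, 2 * δ],
        ![star b, b, 1, 2 * δ, -δ, -δ],
        ![-δ, -δ, 2 * δ, 1, b, star b],
        ![2 * δ, -δ, -δ, star b, 1, b],
        ![-δ, 2 * δ, -δ, b, star b, 1]]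
    A.IsHermitian ∧ A.PosSemidef ∧ A * A = (3 : ℂ) • A ∧ A.rank = 2 := by
  intro δ b A
  have hA : A = sixMatrix b (star b) δ := rfl
  have hstar : star b = -(1 / 2) - Complex.I / (2 * (Real.sqrt 3 : ℂ)) := by
    simp [b, sub_eq_add_neg, neg_div]
  have hsqrt3 : ((Real.sqrt 3 : ℝ) : ℂ) ^ 2 = 3 := by norm_cast; simp
  have hsqrt2 : ((Real.sqrt 2 : ℝ) : ℂ) ^ 2 = 2 := by norm_cast; simp
  have hsum : b + star b = -1 := by rw [hstar]; ring
  have hprod : 3 * (b * star b) = 1 := by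
    rw [hstar]
    simp only [b]
    field_simp
    linear_combination -hsqrt3 - 3 * Complex.I_sq
  have hδ : 9 * δ ^ 2 = 2 := by norm_num [δ, div_pow, hsqrt2]
  have hH : A.IsHermitian := sixMatrix_isHermitian rfl (by simp [δ])
  have hM : A * A = (3 : ℂ) • A := sixMatrix_mul_self hsum hprod hδ
  have hrank : (A.rank : ℂ) = 2 := by
    rw [Matrix.rank_eq_trace_div_of_mul_self_eq_smul three_ne_zero hM, hA, sixMatrix_trace]
    norm_num
  exact ⟨hH, hH.posSemidef_of_mul_self_eq_smul (by norm_num) hM, hM, by exact_mod_cast hrank⟩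
end

section
/- With δ = √2/3, b = -1/2 + i/(2√3), φ = (1, b, conj(b), -δ, 2δ, -δ) and ψ = (0, 1-|b|², b-conj(b)², δ(conj(b)-1), -δ(2conj(b)+1), δ(conj(b)+2)) in ℂ⁶, the four entrywise products conj(φ)·φ, conj(φ)·ψ, conj(ψ)·φ, conj(ψ)·ψ are linearly independent in ℂ⁶. -/
/-!
On the coordinates `0, 3, 4, 5` the four products form a `4 × 4` matrix whose determinant is
`27 |δ|⁶ (c - conj c)` with `c = conj b`. It is nonzero because `δ ≠ 0` and `b` is not real.
-/

theorem LinearIndependent.of_det_submatrix_ne_zero {R ι n : Type*} [CommRing R] [IsDomain R]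
    [Fintype n] [DecidableEq n] {v : n → ι → R} (s : n → ι)
    (h : (Matrix.of fun i j => v i (s j)).det ≠ 0) : LinearIndependent R v :=
  .of_comp (LinearMap.funLeft R R s) (Matrix.linearIndependent_rows_of_det_ne_zero h)

theorem det_conjProducts_submatrix {R : Type*} [CommRing R] [StarRing R] (δ c p q r s : R) :
    let φ : Fin 6 → R := ![1, p, q, -δ, 2 * δ, -δ]
    let ψ : Fin 6 → R := ![0, r, s, δ * (c - 1), -δ * (2 * c + 1), δ * (c + 2)]
    (Matrix.of fun i j =>
      (![fun k => star (φ k) * φ k, fun k => star (φ k) * ψ k,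
        fun k => star (ψ k) * φ k, fun k => star (ψ k) * ψ k] : Fin 4 → Fin 6 → R) i
        (![0, 3, 4, 5] j)).det = 27 * (star δ * δ) ^ 3 * (c - star c) := by
  simp only [Matrix.det_succ_row_zero, Fin.sum_univ_succ, Matrix.det_unique, Fin.sum_univ_zero]
  simp [Fin.succAbove]
  ring

theorem linearIndependent_conjProducts {K : Type*} [Field K] [CharZero K] [StarRing K]
    {δ c : K} (hδ : δ ≠ 0) (hc : star c ≠ c) (p q r s : K) :
    let φ : Fin 6 → K := ![1, p, q, -δ, 2 * δ, -δ]
    let ψ : Fin 6 → K := ![0, r, s, δ * (c - 1), -δ * (2 * c + 1), δ * (c + 2)]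
    LinearIndependent K
      ![fun k => star (φ k) * φ k, fun k => star (φ k) * ψ k,
        fun k => star (ψ k) * φ k, fun k => star (ψ k) * ψ k] := by
  refine .of_det_submatrix_ne_zero ![0, 3, 4, 5] ?_
  rw [det_conjProducts_submatrix]
  have hnormSq : star δ * δ ≠ 0 := mul_ne_zero (star_ne_zero.mpr hδ) hδ
  exact mul_ne_zero (mul_ne_zero (by norm_num) (pow_ne_zero 3 hnormSq)) (sub_ne_zero.mpr hc.symm)

/-- The four entrywise products `conj(φ)·φ`, `conj(φ)·ψ`, `conj(ψ)·φ`, `conj(ψ)·ψ`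
are linearly independent in `ℂ⁶`. -/
theorem stmt_16 :
    let δ : ℂ := (Real.sqrt 2 : ℂ) / 3
    let b : ℂ := -(1 / 2) + Complex.I / (2 * (Real.sqrt 3 : ℂ))
    let φ : Fin 6 → ℂ := ![1, b, star b, -δ, 2 * δ, -δ]
    let ψ : Fin 6 → ℂ := ![0, 1 - ((‖b‖ : ℝ) : ℂ) ^ 2, b - (star b) ^ 2,
      δ * (star b - 1), -δ * (2 * star b + 1), δ * (star b + 2)]
    LinearIndependent ℂ
      ![fun i => star (φ i) * φ i, fun i => star (φ i) * ψ i,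
        fun i => star (ψ i) * φ i, fun i => star (ψ i) * ψ i] := by
  intro δ b φ ψ
  have hδ : δ ≠ 0 := by simp [δ]
  have hb : star b ≠ b := by
    rw [Ne, Complex.star_def, Complex.conj_eq_iff_im]
    simp only [b, Complex.add_im, Complex.neg_im, Complex.div_ofNat_im, Complex.one_im]
    rw [← Complex.ofReal_ofNat, ← Complex.ofReal_mul, Complex.div_ofReal_im]
    simp
  exact linearIndependent_conjProducts (c := star b) hδ (by rwa [star_star, ne_comm]) b (star b) _ _
end
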